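/- arXiv:2308.07479 — 4 statements merged into one kernel-verified Lean document; each statement's English description precedes it below -/
import Mathlib

section
/- Let p be a prime with p ≡ 1 (mod 4), and let B_H(p) be the subgroup of SL₂(ℤ/pℤ) consisting of the upper-triangular matrices (a b; 0 d) whose diagonal entries a and d are squares in (ℤ/pℤ)*. Then the action of B_H(p) on (ℤ/pℤ)² ∖ {0} by matrix-vector multiplication has exactly 4 orbits. -/
/-- Classifier of orbits: square class of the "lowest" nonzero coordinate. -/
def stmt5Cls (p : ℕ) [Fact p.Prime] (v : Fin 2 → ZMod p) : Fin 4 :=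
  if v 1 = 0 then (if quadraticChar (ZMod p) (v 0) = 1 then 0 else 1)
  else (if quadraticChar (ZMod p) (v 1) = 1 then 2 else 3)

/-- Orbit representatives, `c` a fixed nonsquare. -/
def stmt5Rep (p : ℕ) (c : ZMod p) : Fin 4 → Fin 2 → ZMod p :=
  ![![1, 0], ![c, 0], ![0, 1], ![0, c]]

/-- For a prime `p ≡ 1 (mod 4)`, the action of the subgroup `B_H(p)` of `SL₂(ℤ/pℤ)` of
upper-triangular matrices with square diagonal entries on `(ℤ/pℤ)² \ {0}` by
matrix-vector multiplication has exactly `4` orbits. -/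
theorem stmt_5 (p : ℕ) (hp : p.Prime) (hp4 : p % 4 = 1) :
    Nat.card (Quot (fun v w : {v : Fin 2 → ZMod p // v ≠ 0} =>
      ∃ A : Matrix (Fin 2) (Fin 2) (ZMod p),
        A.det = 1 ∧ A 1 0 = 0 ∧
        (∃ u : (ZMod p)ˣ, IsSquare u ∧ (u : ZMod p) = A 0 0) ∧
        (∃ u : (ZMod p)ˣ, IsSquare u ∧ (u : ZMod p) = A 1 1) ∧
        A.mulVec v.1 = w.1)) = 4 := by
  haveI : Fact p.Prime := ⟨hp⟩
  haveI : NeZero p := ⟨hp.pos.ne'⟩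
  have hp2 : p ≠ 2 := by omega
  have hchar : ringChar (ZMod p) ≠ 2 := by
    rw [ZMod.ringChar_zmod_n]; exact hp2
  obtain ⟨c, hc⟩ := FiniteField.exists_nonsquare (F := ZMod p) hchar
  have hc0 : c ≠ 0 := fun h => hc (h ▸ ⟨0, by simp⟩)
  -- helpers
  have tounit : ∀ x : ZMod p, x ≠ 0 → IsSquare x →
      ∃ u : (ZMod p)ˣ, IsSquare u ∧ (u : ZMod p) = x := by
    rintro x hx ⟨r, hr⟩
    have hr0 : r ≠ 0 := by rintro rfl; simp at hr; exact hx hr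
    exact ⟨Units.mk0 r hr0 * Units.mk0 r hr0, ⟨Units.mk0 r hr0, rfl⟩, by simp [hr]⟩
  have hsqinv : ∀ x y : ZMod p, y ≠ 0 → IsSquare (x * y) → IsSquare (x * y⁻¹) := by
    rintro x y hy ⟨r, hr⟩
    refine ⟨r * y⁻¹, ?_⟩
    field_simp
    linear_combination hr
  have χ1 : ∀ x : ZMod p, x ≠ 0 → IsSquare x → quadraticChar (ZMod p) x = 1 := fun x hx h =>
    (quadraticChar_one_iff_isSquare hx).mpr h
  have χsq : ∀ x : ZMod p, x ≠ 0 → quadraticChar (ZMod p) x = 1 → IsSquare x := fun x hx h =>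
    (quadraticChar_one_iff_isSquare hx).mp h
  have χns : ∀ x : ZMod p, ¬IsSquare x → quadraticChar (ZMod p) x = -1 := fun x h =>
    quadraticChar_neg_one_iff_not_isSquare.mpr h
  have hχc : quadraticChar (ZMod p) c ≠ 1 := by rw [χns c hc]; decide
  have hχc2 : quadraticCharFun (ZMod p) c ≠ 1 := by rwa [← quadraticChar_apply]
  have hne : ∀ v : {v : Fin 2 → ZMod p // v ≠ 0}, v.1 1 = 0 → v.1 0 ≠ 0 := by
    intro v h1 h0
    exact v.2 (funext fun i => by fin_cases i <;> assumption)
  -- the classifier respects the relation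
  have hf : ∀ v w : {v : Fin 2 → ZMod p // v ≠ 0},
      (∃ A : Matrix (Fin 2) (Fin 2) (ZMod p),
        A.det = 1 ∧ A 1 0 = 0 ∧
        (∃ u : (ZMod p)ˣ, IsSquare u ∧ (u : ZMod p) = A 0 0) ∧
        (∃ u : (ZMod p)ˣ, IsSquare u ∧ (u : ZMod p) = A 1 1) ∧
        A.mulVec v.1 = w.1) → stmt5Cls p v.1 = stmt5Cls p w.1 := by
    rintro v w ⟨A, hdet, h10, ⟨u, hu, huA⟩, ⟨u', hu', hu'A⟩, hmul⟩
    have ha0 : A 0 0 ≠ 0 := huA ▸ u.ne_zero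
    have hd0 : A 1 1 ≠ 0 := hu'A ▸ u'.ne_zero
    have haSq : IsSquare (A 0 0) := by
      obtain ⟨s, hs⟩ := hu
      exact ⟨(s : ZMod p), by rw [← huA, hs]; push_cast; rfl⟩
    have hdSq : IsSquare (A 1 1) := by
      obtain ⟨s, hs⟩ := hu'
      exact ⟨(s : ZMod p), by rw [← hu'A, hs]; push_cast; rfl⟩
    have hχa := χ1 _ ha0 haSq
    have hχd := χ1 _ hd0 hdSq
    have hw0 : w.1 0 = A 0 0 * v.1 0 + A 0 1 * v.1 1 := by
      have := congrFun hmul 0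
      simpa [Matrix.mulVec, dotProduct, Fin.sum_univ_two] using this.symm
    have hw1 : w.1 1 = A 1 1 * v.1 1 := by
      have := congrFun hmul 1
      simpa [Matrix.mulVec, dotProduct, Fin.sum_univ_two, h10] using this.symm
    by_cases h1 : v.1 1 = 0
    · have hw1' : w.1 1 = 0 := by rw [hw1, h1, mul_zero]
      have hw0' : w.1 0 = A 0 0 * v.1 0 := by rw [hw0, h1]; ring
      have hχ : quadraticChar (ZMod p) (w.1 0) = quadraticChar (ZMod p) (v.1 0) := by
        rw [hw0', map_mul, hχa, one_mul]
      unfold stmt5Cls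
      rw [if_pos h1, if_pos hw1', hχ]
    · have hw1' : w.1 1 ≠ 0 := by rw [hw1]; exact mul_ne_zero hd0 h1
      have hχ : quadraticChar (ZMod p) (w.1 1) = quadraticChar (ZMod p) (v.1 1) := by
        rw [hw1, map_mul, hχd, one_mul]
      unfold stmt5Cls
      rw [if_neg h1, if_neg hw1', hχ]
  -- representatives are nonzero
  have hrp : ∀ i : Fin 4, stmt5Rep p c i ≠ 0 := by
    intro i h
    fin_cases i
    · exact one_ne_zero (α := ZMod p) (by simpa [stmt5Rep] using congrFun h 0)
    · exact hc0 (by simpa [stmt5Rep] using congrFun h 0)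
    · exact one_ne_zero (α := ZMod p) (by simpa [stmt5Rep] using congrFun h 1)
    · exact hc0 (by simpa [stmt5Rep] using congrFun h 1)
  -- every element is related to its representative
  have hrel : ∀ v : {v : Fin 2 → ZMod p // v ≠ 0},
      ∃ A : Matrix (Fin 2) (Fin 2) (ZMod p),
        A.det = 1 ∧ A 1 0 = 0 ∧
        (∃ u : (ZMod p)ˣ, IsSquare u ∧ (u : ZMod p) = A 0 0) ∧
        (∃ u : (ZMod p)ˣ, IsSquare u ∧ (u : ZMod p) = A 1 1) ∧
        A.mulVec (stmt5Rep p c (stmt5Cls p v.1)) = v.1 := by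
    intro v
    by_cases h1 : v.1 1 = 0
    · have hv0 : v.1 0 ≠ 0 := hne v h1
      by_cases hs : quadraticChar (ZMod p) (v.1 0) = 1
      · -- rep ![1,0]
        have hcl : stmt5Cls p v.1 = 0 := by unfold stmt5Cls; rw [if_pos h1, if_pos hs]
        have hsq : IsSquare (v.1 0) := χsq _ hv0 hs
        refine ⟨!![v.1 0, 0; 0, (v.1 0)⁻¹], ?_, by simp, ?_, ?_, ?_⟩
        · rw [Matrix.det_fin_two_of]; field_simp; simp
        · simpa using tounit _ hv0 hsq
        · simpa using tounit _ (inv_ne_zero hv0) hsq.inv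
        · funext i; rw [hcl]; fin_cases i <;>
            simp [Matrix.mulVec, dotProduct, Fin.sum_univ_two, stmt5Rep, h1]
      · -- rep ![c,0]
        have hcl : stmt5Cls p v.1 = 1 := by unfold stmt5Cls; rw [if_pos h1, if_neg hs]
        have hns : ¬IsSquare (v.1 0) := fun h => hs (χ1 _ hv0 h)
        have hsq : IsSquare (v.1 0 * c⁻¹) := by
          refine hsqinv _ _ hc0 (χsq _ (mul_ne_zero hv0 hc0) ?_)
          rw [map_mul, χns _ hns, χns _ hc]; ring
        have hx0 : v.1 0 * c⁻¹ ≠ 0 := mul_ne_zero hv0 (inv_ne_zero hc0)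
        refine ⟨!![v.1 0 * c⁻¹, 0; 0, (v.1 0 * c⁻¹)⁻¹], ?_, by simp, ?_, ?_, ?_⟩
        · rw [Matrix.det_fin_two_of]; field_simp; simp
        · simpa using tounit _ hx0 hsq
        · simpa using tounit _ (inv_ne_zero hx0) hsq.inv
        · funext i; rw [hcl]; fin_cases i <;>
            simp [Matrix.mulVec, dotProduct, Fin.sum_univ_two, stmt5Rep, h1] <;>
            field_simp
    · by_cases hs : quadraticChar (ZMod p) (v.1 1) = 1
      · -- rep ![0,1]
        have hcl : stmt5Cls p v.1 = 2 := by unfold stmt5Cls; rw [if_neg h1, if_pos hs]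
        have hsq : IsSquare (v.1 1) := χsq _ h1 hs
        refine ⟨!![(v.1 1)⁻¹, v.1 0; 0, v.1 1], ?_, by simp, ?_, ?_, ?_⟩
        · rw [Matrix.det_fin_two_of]; field_simp; simp
        · simpa using tounit _ (inv_ne_zero h1) hsq.inv
        · simpa using tounit _ h1 hsq
        · funext i; rw [hcl]; fin_cases i <;>
            simp [Matrix.mulVec, dotProduct, Fin.sum_univ_two, stmt5Rep]
      · -- rep ![0,c]
        have hcl : stmt5Cls p v.1 = 3 := by unfold stmt5Cls; rw [if_neg h1, if_neg hs]
        have hns : ¬IsSquare (v.1 1) := fun h => hs (χ1 _ h1 h)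
        have hsq : IsSquare (v.1 1 * c⁻¹) := by
          refine hsqinv _ _ hc0 (χsq _ (mul_ne_zero h1 hc0) ?_)
          rw [map_mul, χns _ hns, χns _ hc]; ring
        have hy0 : v.1 1 * c⁻¹ ≠ 0 := mul_ne_zero h1 (inv_ne_zero hc0)
        refine ⟨!![(v.1 1 * c⁻¹)⁻¹, v.1 0 * c⁻¹; 0, v.1 1 * c⁻¹], ?_, by simp, ?_, ?_, ?_⟩
        · rw [Matrix.det_fin_two_of]; field_simp; simp
        · simpa using tounit _ (inv_ne_zero hy0) hsq.inv
        · simpa using tounit _ hy0 hsq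
        · funext i; rw [hcl]; fin_cases i <;>
            simp [Matrix.mulVec, dotProduct, Fin.sum_univ_two, stmt5Rep] <;>
            field_simp
  -- build the equivalence
  have h1p : (1 : ZMod p) ≠ 0 := one_ne_zero
  let e : Quot (fun v w : {v : Fin 2 → ZMod p // v ≠ 0} =>
      ∃ A : Matrix (Fin 2) (Fin 2) (ZMod p),
        A.det = 1 ∧ A 1 0 = 0 ∧
        (∃ u : (ZMod p)ˣ, IsSquare u ∧ (u : ZMod p) = A 0 0) ∧
        (∃ u : (ZMod p)ˣ, IsSquare u ∧ (u : ZMod p) = A 1 1) ∧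
        A.mulVec v.1 = w.1) ≃ Fin 4 :=
    { toFun := Quot.lift (fun v => stmt5Cls p v.1) hf
      invFun := fun i => Quot.mk _ ⟨stmt5Rep p c i, hrp i⟩
      left_inv := by
        intro q
        induction q using Quot.ind with
        | _ v => exact Quot.sound (hrel v)
      right_inv := by
        intro i
        fin_cases i <;>
          simp [stmt5Cls, stmt5Rep, h1p, hc0, hχc, hχc2, map_one] }
  rw [Nat.card_congr e, Nat.card_eq_fintype_card, Fintype.card_fin]
end

section
/- Let α = √29 ∈ ℝ. Define the polynomials c = x₁²x₃ − 3x₁x₂x₃ − x₁x₃² − x₂³ + x₂²x₃ + x₂x₃² + 5x₂x₃x₄ − x₂x₄² + 4x₃³ − 5x₃²x₄ − 3x₃x₄² and q = x₁x₄ − x₂x₃ + x₂x₄ + x₃² − 3x₃x₄ − 2x₄² in four variables over ℝ. Then c and q both vanish at each of the four points (1, 0, 0, 0), (2, 0, 0, 1), (3α+18, α+5, (α+5)/2, 1), and (−3α+18, −α+5, (−α+5)/2, 1). -/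
/-- The cubic `c` and the quadric `q` cutting out the canonical model of `X_H(29)` both
vanish at the four cusps `(1,0,0,0)`, `(2,0,0,1)`, `(3√29+18, √29+5, (√29+5)/2, 1)` and
`(-3√29+18, -√29+5, (-√29+5)/2, 1)`. -/
theorem stmt_13 (α : ℝ) (hα : α = Real.sqrt 29)
    (c q : ℝ → ℝ → ℝ → ℝ → ℝ)
    (hc : ∀ x₁ x₂ x₃ x₄ : ℝ, c x₁ x₂ x₃ x₄ =
      x₁ ^ 2 * x₃ - 3 * x₁ * x₂ * x₃ - x₁ * x₃ ^ 2 - x₂ ^ 3 + x₂ ^ 2 * x₃ + x₂ * x₃ ^ 2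
        + 5 * x₂ * x₃ * x₄ - x₂ * x₄ ^ 2 + 4 * x₃ ^ 3 - 5 * x₃ ^ 2 * x₄ - 3 * x₃ * x₄ ^ 2)
    (hq : ∀ x₁ x₂ x₃ x₄ : ℝ, q x₁ x₂ x₃ x₄ =
      x₁ * x₄ - x₂ * x₃ + x₂ * x₄ + x₃ ^ 2 - 3 * x₃ * x₄ - 2 * x₄ ^ 2) :
    (c 1 0 0 0 = 0 ∧ q 1 0 0 0 = 0) ∧
    (c 2 0 0 1 = 0 ∧ q 2 0 0 1 = 0) ∧
    (c (3 * α + 18) (α + 5) ((α + 5) / 2) 1 = 0 ∧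
      q (3 * α + 18) (α + 5) ((α + 5) / 2) 1 = 0) ∧
    (c (-3 * α + 18) (-α + 5) ((-α + 5) / 2) 1 = 0 ∧
      q (-3 * α + 18) (-α + 5) ((-α + 5) / 2) 1 = 0) := by
  have h2 : α ^ 2 = 29 := by rw [hα]; exact Real.sq_sqrt (by norm_num)
  refine ⟨⟨?_, ?_⟩, ⟨?_, ?_⟩, ⟨?_, ?_⟩, ⟨?_, ?_⟩⟩ <;> simp only [hc, hq]
  · ring
  · ring
  · ring
  · ring
  · linear_combination (-5/2 - α/2) * h2
  · linear_combination (-1/4 : ℝ) * h2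
  · linear_combination (-5/2 + α/2) * h2
  · linear_combination (-1/4 : ℝ) * h2
end

section
/- Let α = √37 ∈ ℝ. Define the polynomials c = 2x₁²x₄ − 5x₁x₄² − 2x₂³ + 2x₂²x₃ − 2x₂x₃² + 6x₂x₃x₄ − 6x₂x₄² − 3x₃³ + 8x₃²x₄ − 9x₃x₄² + 6x₄³ and q = x₁x₃ − x₂² − 2x₃x₄ in four variables over ℝ. Then c and q both vanish at each of the four points (1, 0, 0, 0), (2, 0, 1, 1), (α+5, 6, α−1, 2), and (−α+5, 6, −α−1, 2). -/
/-- The cubic `c` and the quadric `q` cutting out the canonical model of `X_H(37)` both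
vanish at the four cusps `(1,0,0,0)`, `(2,0,1,1)`, `(√37+5, 6, √37-1, 2)` and
`(-√37+5, 6, -√37-1, 2)`. -/
theorem stmt_14 (α : ℝ) (hα : α = Real.sqrt 37)
    (c q : ℝ → ℝ → ℝ → ℝ → ℝ)
    (hc : ∀ x₁ x₂ x₃ x₄ : ℝ, c x₁ x₂ x₃ x₄ =
      2 * x₁ ^ 2 * x₄ - 5 * x₁ * x₄ ^ 2 - 2 * x₂ ^ 3 + 2 * x₂ ^ 2 * x₃ - 2 * x₂ * x₃ ^ 2
        + 6 * x₂ * x₃ * x₄ - 6 * x₂ * x₄ ^ 2 - 3 * x₃ ^ 3 + 8 * x₃ ^ 2 * x₄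
        - 9 * x₃ * x₄ ^ 2 + 6 * x₄ ^ 3)
    (hq : ∀ x₁ x₂ x₃ x₄ : ℝ, q x₁ x₂ x₃ x₄ = x₁ * x₃ - x₂ ^ 2 - 2 * x₃ * x₄) :
    (c 1 0 0 0 = 0 ∧ q 1 0 0 0 = 0) ∧
    (c 2 0 1 1 = 0 ∧ q 2 0 1 1 = 0) ∧
    (c (α + 5) 6 (α - 1) 2 = 0 ∧ q (α + 5) 6 (α - 1) 2 = 0) ∧
    (c (-α + 5) 6 (-α - 1) 2 = 0 ∧ q (-α + 5) 6 (-α - 1) 2 = 0) := by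
  have hα2 : α ^ 2 = 37 := by
    rw [hα, Real.sq_sqrt]; norm_num
  simp only [hc, hq]
  refine ⟨⟨by ring, by ring⟩, ⟨by ring, by ring⟩, ⟨?_, ?_⟩, ⟨?_, ?_⟩⟩ <;>
    nlinarith [hα2, sq_nonneg α]
end

section
/- Let α = √41 ∈ ℝ. Define the quadratic polynomials Q₁ = x₁x₃ − x₂² + 2x₂x₄ + 2x₂x₅ − 2x₃² − x₃x₄ + x₃x₅ − 2x₄² − 2x₄x₅ − x₅², Q₂ = x₁x₄ − x₂x₃ + x₂x₄ − x₃² + x₃x₄ + 2x₃x₅ − 2x₄² − 2x₄x₅, and Q₃ = x₁x₅ − x₂x₅ − x₃² + 2x₃x₄ + 2x₃x₅ − 2x₄² − x₄x₅ + x₅² in five variables over ℝ. Then Q₁, Q₂ and Q₃ all vanish at each of the four points (1, 0, 0, 0, 0), (0, 1, 0, 0, 1), (18α+114, 6α+54, 6α+42, 3α+21, 12), and (−18α+114, −6α+54, −6α+42, −3α+21, 12). -/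
/-- The three quadrics `Q₁, Q₂, Q₃` cutting out the canonical model of `X_H(41)` all
vanish at the four cusps `(1,0,0,0,0)`, `(0,1,0,0,1)`,
`(18√41+114, 6√41+54, 6√41+42, 3√41+21, 12)` and
`(-18√41+114, -6√41+54, -6√41+42, -3√41+21, 12)`. -/
theorem stmt_15 (α : ℝ) (hα : α = Real.sqrt 41)
    (Q₁ Q₂ Q₃ : ℝ → ℝ → ℝ → ℝ → ℝ → ℝ)
    (hQ₁ : ∀ x₁ x₂ x₃ x₄ x₅ : ℝ, Q₁ x₁ x₂ x₃ x₄ x₅ =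
      x₁ * x₃ - x₂ ^ 2 + 2 * x₂ * x₄ + 2 * x₂ * x₅ - 2 * x₃ ^ 2 - x₃ * x₄ + x₃ * x₅
        - 2 * x₄ ^ 2 - 2 * x₄ * x₅ - x₅ ^ 2)
    (hQ₂ : ∀ x₁ x₂ x₃ x₄ x₅ : ℝ, Q₂ x₁ x₂ x₃ x₄ x₅ =
      x₁ * x₄ - x₂ * x₃ + x₂ * x₄ - x₃ ^ 2 + x₃ * x₄ + 2 * x₃ * x₅ - 2 * x₄ ^ 2
        - 2 * x₄ * x₅)
    (hQ₃ : ∀ x₁ x₂ x₃ x₄ x₅ : ℝ, Q₃ x₁ x₂ x₃ x₄ x₅ =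
      x₁ * x₅ - x₂ * x₅ - x₃ ^ 2 + 2 * x₃ * x₄ + 2 * x₃ * x₅ - 2 * x₄ ^ 2 - x₄ * x₅
        + x₅ ^ 2) :
    (Q₁ 1 0 0 0 0 = 0 ∧ Q₂ 1 0 0 0 0 = 0 ∧ Q₃ 1 0 0 0 0 = 0) ∧
    (Q₁ 0 1 0 0 1 = 0 ∧ Q₂ 0 1 0 0 1 = 0 ∧ Q₃ 0 1 0 0 1 = 0) ∧
    (Q₁ (18 * α + 114) (6 * α + 54) (6 * α + 42) (3 * α + 21) 12 = 0 ∧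
      Q₂ (18 * α + 114) (6 * α + 54) (6 * α + 42) (3 * α + 21) 12 = 0 ∧
      Q₃ (18 * α + 114) (6 * α + 54) (6 * α + 42) (3 * α + 21) 12 = 0) ∧
    (Q₁ (-18 * α + 114) (-6 * α + 54) (-6 * α + 42) (-3 * α + 21) 12 = 0 ∧
      Q₂ (-18 * α + 114) (-6 * α + 54) (-6 * α + 42) (-3 * α + 21) 12 = 0 ∧
      Q₃ (-18 * α + 114) (-6 * α + 54) (-6 * α + 42) (-3 * α + 21) 12 = 0) := by
  have h2 : α ^ 2 = 41 := by rw [hα, sq]; exact Real.mul_self_sqrt (by norm_num)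
  refine ⟨⟨?_, ?_, ?_⟩, ⟨?_, ?_, ?_⟩, ⟨?_, ?_, ?_⟩, ⟨?_, ?_, ?_⟩⟩ <;>
    simp only [hQ₁, hQ₂, hQ₃] <;> nlinarith [h2]
end
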